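/- (Continuity of the marginal flow) Let d ≥ 1 and let K be a finite index set. For each k ∈ K let w_k ≥ 0, let p_k : ℝ × ℝ^d → ℝ be continuously differentiable with p_k(t,x) > 0, and let u_k : ℝ × ℝ^d → ℝ^d be continuously differentiable, such that each pair satisfies the continuity equation ∂_t p_k(t,x) = −div_x(p_k(t,x) · u_k(t,x)). Define the marginal density p(t,x) = Σ_{k∈K} w_k p_k(t,x), assume p(t,x) > 0, and define the marginal velocity field u(t,x) = (Σ_{k∈K} w_k p_k(t,x) u_k(t,x)) / p(t,x). Then the pair (p, u) also satisfies the continuity equation: ∂_t p(t,x) = −div_x(p(t,x) · u(t,x)). -/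

import Mathlib

/- The continuity equation is linear in the flux `p • u`: by the definition of the marginal
velocity, the marginal flux `P • U` is the mixture `Σ_k w_k p_k • u_k` of the conditional
fluxes (this is where `P > 0` enters), and both `∂_t` and `div` commute with finite linear
combinations of differentiable functions. -/

open Finset

/-- Divergence of a vector field `F : ℝ^d → ℝ^d` at `x`: `Σ_i ∂F_i/∂x_i (x)`. -/
noncomputable def divergence {d : ℕ} (F : (Fin d → ℝ) → (Fin d → ℝ)) (x : Fin d → ℝ) : ℝ :=
  ∑ i, fderiv ℝ (fun y => F y i) x (Pi.single i 1)

section Partial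

variable {𝕜 E F G : Type*} [NontriviallyNormedField 𝕜]
  [NormedAddCommGroup E] [NormedSpace 𝕜 E] [NormedAddCommGroup F] [NormedSpace 𝕜 F]
  [NormedAddCommGroup G] [NormedSpace 𝕜 G] {f : E → F → G}

theorem Differentiable.partial_fst (hf : Differentiable 𝕜 (fun q : E × F => f q.1 q.2))
    (y : F) : Differentiable 𝕜 (fun x => f x y) :=
  hf.comp (differentiable_id.prodMk (differentiable_const y))

theorem Differentiable.partial_snd (hf : Differentiable 𝕜 (fun q : E × F => f q.1 q.2))
    (x : E) : Differentiable 𝕜 (f x) :=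
  hf.comp ((differentiable_const x).prodMk differentiable_id)

end Partial

theorem deriv_fun_sum_const_mul {𝕜 : Type*} [NontriviallyNormedField 𝕜] {ι : Type*}
    (s : Finset ι) (c : ι → 𝕜) {f : ι → 𝕜 → 𝕜} {t : 𝕜}
    (hf : ∀ k ∈ s, DifferentiableAt 𝕜 (f k) t) :
    deriv (fun τ => ∑ k ∈ s, c k * f k τ) t = ∑ k ∈ s, c k * deriv (f k) t := by
  rw [deriv_fun_sum fun k hk => (hf k hk).const_mul (c k)]
  exact sum_congr rfl fun k hk => deriv_const_mul (c k) (hf k hk)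

theorem divergence_fun_sum_const_mul {d : ℕ} {ι : Type*} (s : Finset ι) (c : ι → ℝ)
    {F : ι → (Fin d → ℝ) → (Fin d → ℝ)} {x : Fin d → ℝ}
    (hF : ∀ k ∈ s, ∀ i, DifferentiableAt ℝ (fun y => F k y i) x) :
    divergence (fun y i => ∑ k ∈ s, c k * F k y i) x = ∑ k ∈ s, c k * divergence (F k) x := by
  have hcomponent : ∀ i, fderiv ℝ (fun y => ∑ k ∈ s, c k * F k y i) x (Pi.single i 1) =
      ∑ k ∈ s, c k * fderiv ℝ (fun y => F k y i) x (Pi.single i 1) := by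
    intro i
    rw [fderiv_fun_sum fun k hk => (hF k hk i).const_mul (c k), _root_.sum_apply]
    refine sum_congr rfl fun k hk => ?_
    rw [fderiv_const_mul (hF k hk i), smul_apply, smul_eq_mul]
  simp only [divergence, hcomponent, mul_sum]
  exact sum_comm

theorem marginal_continuity_equation_general
    (d : ℕ) (K : Type*) [Fintype K]
    (w : K → ℝ)
    (p : K → ℝ → (Fin d → ℝ) → ℝ)
    (u : K → ℝ → (Fin d → ℝ) → (Fin d → ℝ))
    (hp : ∀ k, ContDiff ℝ 1 (fun q : ℝ × (Fin d → ℝ) => p k q.1 q.2))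
    (hu : ∀ k, ContDiff ℝ 1 (fun q : ℝ × (Fin d → ℝ) => u k q.1 q.2))
    (hcont : ∀ k t x,
      deriv (fun s => p k s x) t =
        -divergence (fun y => fun i => p k t y * u k t y i) x)
    (P : ℝ → (Fin d → ℝ) → ℝ)
    (hP : ∀ t x, P t x = ∑ k, w k * p k t x)
    (hPpos : ∀ t x, 0 < P t x)
    (U : ℝ → (Fin d → ℝ) → (Fin d → ℝ))
    (hU : ∀ t x i, U t x i = (∑ k, w k * p k t x * u k t x i) / P t x) :
    ∀ t x,
      deriv (fun s => P s x) t =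
        -divergence (fun y => fun i => P t y * U t y i) x := by
  intro t x
  have hdp k := (hp k).differentiable one_ne_zero
  have hdu k := (hu k).differentiable one_ne_zero
  have hflux : (fun y i => P t y * U t y i) = fun y i => ∑ k, w k * (p k t y * u k t y i) := by
    funext y i
    rw [hU, mul_div_cancel₀ _ (hPpos t y).ne']
    simp only [mul_assoc]
  have hdiv : divergence (fun y i => P t y * U t y i) x =
      ∑ k, w k * divergence (fun y i => p k t y * u k t y i) x := by
    rw [hflux]
    refine divergence_fun_sum_const_mul _ w fun k _ i => ?_
    exact ((hdp k).partial_snd t x).mul (differentiable_pi.mp ((hdu k).partial_snd t) i x)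
  have hderiv : deriv (fun s => P s x) t = ∑ k, w k * deriv (fun s => p k s x) t := by
    simp only [hP]
    exact deriv_fun_sum_const_mul _ w fun k _ => (hdp k).partial_fst x t
  simp only [hderiv, hdiv, hcont, mul_neg, sum_neg_distrib]

/-- **Continuity of the marginal flow.** If each conditional pair `(p_k, u_k)` satisfies
the continuity equation `∂_t p_k = −div(p_k u_k)`, then the mixture
`p = Σ_k w_k p_k` together with the posterior-weighted marginal velocity
`u = (Σ_k w_k p_k u_k)/p` also satisfies the continuity equation. -/
theorem marginal_continuity_equation
    (d : ℕ) (hd : 1 ≤ d) (K : Type*) [Fintype K]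
    (w : K → ℝ) (hw : ∀ k, 0 ≤ w k)
    (p : K → ℝ → (Fin d → ℝ) → ℝ)
    (u : K → ℝ → (Fin d → ℝ) → (Fin d → ℝ))
    (hp : ∀ k, ContDiff ℝ 1 (fun q : ℝ × (Fin d → ℝ) => p k q.1 q.2))
    (hppos : ∀ k t x, 0 < p k t x)
    (hu : ∀ k, ContDiff ℝ 1 (fun q : ℝ × (Fin d → ℝ) => u k q.1 q.2))
    (hcont : ∀ k t x,
      deriv (fun s => p k s x) t =
        -divergence (fun y => fun i => p k t y * u k t y i) x)
    (P : ℝ → (Fin d → ℝ) → ℝ)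
    (hP : ∀ t x, P t x = ∑ k, w k * p k t x)
    (hPpos : ∀ t x, 0 < P t x)
    (U : ℝ → (Fin d → ℝ) → (Fin d → ℝ))
    (hU : ∀ t x i, U t x i = (∑ k, w k * p k t x * u k t x i) / P t x) :
    ∀ t x,
      deriv (fun s => P s x) t =
        -divergence (fun y => fun i => P t y * U t y i) x :=
  marginal_continuity_equation_general d K w p u hp hu hcont P hP hPpos U hU
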